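/- arXiv:1307.2200 — 3 statements merged into one kernel-verified Lean document; each statement's English description precedes it below -/
import Mathlib

section
/- Let V be a type of nodes, h : V → ℝ a heuristic function, ω a real number, and let x₁, x₂, …, x_ℓ (ℓ ≥ 1) be a cheapest path from the node x = x₁ to a solution node x_ℓ, with positive edge costs c₁, …, c_{ℓ−1} ∈ ℝ (cᵢ being the cost of the edge (xᵢ, x_{i+1})), so that the cheapest cost-to-go satisfies h*(x) = Σ_{i=1}^{ℓ−1} cᵢ. Assume h(x_ℓ) = 0 and that the weighted inconsistency rate along every edge of this path is at most ω, i.e., h(xᵢ) − h(x_{i+1}) ≤ ω·cᵢ for each i = 1, …, ℓ−1. Then h(x) ≤ ω·h*(x). -/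
open Finset

theorem sub_le_sum_of_sub_succ_le {M : Type*} [AddCommGroup M] [PartialOrder M]
    [IsOrderedAddMonoid M] {f g : ℕ → M} {n : ℕ} (hfg : ∀ i < n, f i - f (i + 1) ≤ g i) :
    f 0 - f n ≤ ∑ i ∈ range n, g i :=
  calc f 0 - f n = ∑ i ∈ range n, (f i - f (i + 1)) := (sum_range_sub' f n).symm
    _ ≤ ∑ i ∈ range n, g i := sum_le_sum fun i hi => hfg i (mem_range.mp hi)

theorem heuristic_accuracy_le_inconsistency_general
    {V : Type*} (h : V → ℝ) (ω : ℝ) (ℓ : ℕ)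
    (x : ℕ → V) (c : ℕ → ℝ)
    (hsol : h (x (ℓ - 1)) = 0)
    (hWI : ∀ i, i < ℓ - 1 → h (x i) - h (x (i + 1)) ≤ ω * c i)
    (hstar : ℝ) (hstar_def : hstar = ∑ i ∈ Finset.range (ℓ - 1), c i) :
    h (x 0) ≤ ω * hstar := by
  calc h (x 0) = h (x 0) - h (x (ℓ - 1)) := by rw [hsol, sub_zero]
    _ ≤ ∑ i ∈ range (ℓ - 1), ω * c i := sub_le_sum_of_sub_succ_le hWI
    _ = ω * hstar := by rw [hstar_def, mul_sum]

/-- **Theorem 1 (path-wise core).** Let `x 0, x 1, …, x (ℓ-1)` (with `ℓ ≥ 1`) be a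
cheapest path from the node `x 0` to a solution node `x (ℓ-1)`, with positive edge
costs `c i > 0` for `i = 0, …, ℓ-2` (cost of edge `(x i, x (i+1))`), so that
`h* (x 0) = ∑_{i<ℓ-1} c i`.  If `h (x (ℓ-1)) = 0` and the weighted inconsistency rate
along every edge of the path is at most `ω`, i.e. `h (x i) - h (x (i+1)) ≤ ω * c i`,
then `h (x 0) ≤ ω * h* (x 0)`. -/
theorem heuristic_accuracy_le_inconsistency
    {V : Type*} (h : V → ℝ) (ω : ℝ) (ℓ : ℕ) (hℓ : 1 ≤ ℓ)
    (x : ℕ → V) (c : ℕ → ℝ)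
    (hc : ∀ i, i < ℓ - 1 → 0 < c i)
    (hsol : h (x (ℓ - 1)) = 0)
    (hWI : ∀ i, i < ℓ - 1 → h (x i) - h (x (i + 1)) ≤ ω * c i)
    (hstar : ℝ) (hstar_def : hstar = ∑ i ∈ Finset.range (ℓ - 1), c i) :
    h (x 0) ≤ ω * hstar :=
  heuristic_accuracy_le_inconsistency_general h ω ℓ x c hsol hWI hstar hstar_def
end

section
/- Let p and Opt be integers with Opt ≥ 1, and let γ be a real number with 0 < γ < 1/Opt. Suppose A is a real number satisfying (1 − γ)·Opt ≤ A ≤ Opt. Then ⌊p − A⌋ = p − Opt. -/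
/-!
Since `⌊p - A⌋ = p - ⌈A⌉`, it suffices that `⌈A⌉ = Opt`, i.e. `Opt - 1 < A ≤ Opt`. The lower
bound holds because the absolute error `Opt - A ≤ γ · Opt` is below `1` once `γ < 1 / Opt`.
-/

theorem Int.floor_intCast_sub {R : Type*} [Ring R] [LinearOrder R] [FloorRing R]
    [IsStrictOrderedRing R] (z : ℤ) (a : R) : ⌊(z : R) - a⌋ = z - ⌈a⌉ := by
  rw [sub_eq_add_neg, Int.floor_intCast_add, Int.floor_neg, ← sub_eq_add_neg]

theorem Int.ceil_eq_of_one_sub_mul_le {n : ℤ} (hn : 0 < n) {γ a : ℝ} (hγ : γ < 1 / n)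
    (h₁ : (1 - γ) * n ≤ a) (h₂ : a ≤ n) : ⌈a⌉ = n := by
  have hγn : γ * n < 1 := (lt_div_iff₀ (Int.cast_pos.mpr hn)).mp hγ
  exact Int.ceil_eq_iff.mpr ⟨by linarith, h₂⟩

theorem floor_profit_sub_fptas_eq_general (p Opt : ℤ) (hOpt : 1 ≤ Opt)
    (γ : ℝ) (hγ1 : γ < 1 / (Opt : ℝ))
    (A : ℝ) (hA1 : (1 - γ) * (Opt : ℝ) ≤ A) (hA2 : A ≤ (Opt : ℝ)) :
    ⌊(p : ℝ) - A⌋ = p - Opt := by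
  rw [Int.floor_intCast_sub, Int.ceil_eq_of_one_sub_mul_le hOpt hγ1 hA1 hA2]

/-- **Proposition.** If `Opt ≥ 1` is an integer, `0 < γ < 1/Opt`, and the FPTAS value
`A` satisfies `(1 - γ) * Opt ≤ A ≤ Opt`, then `⌊p - A⌋ = p - Opt`. -/
theorem floor_profit_sub_fptas_eq (p Opt : ℤ) (hOpt : 1 ≤ Opt)
    (γ : ℝ) (hγ0 : 0 < γ) (hγ1 : γ < 1 / (Opt : ℝ))
    (A : ℝ) (hA1 : (1 - γ) * (Opt : ℝ) ≤ A) (hA2 : A ≤ (Opt : ℝ)) :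
    ⌊(p : ℝ) - A⌋ = p - Opt :=
  floor_profit_sub_fptas_eq_general p Opt hOpt γ hγ1 A hA1 hA2
end

section
/- Let α be a type of items with positive profit function p : α → ℤ>0 and weight function w : α → ℤ>0, let C > 0 be a capacity, and let X be a nonempty finite set of items that contains at least one nonempty subset Y ⊆ X with w(Y) ≤ C. In the Knapsack search graph (nodes are nonempty finite sets of items, with an edge of cost p(i) from a set Z to Z \ {i} for each i ∈ Z with Z \ {i} nonempty, and solutions are the nonempty sets Y with w(Y) ≤ C), the minimum total cost over all paths from X to a solution node equals p(X) − Opt(X), where Opt(X) = max{ p(Y) : ∅ ≠ Y ⊆ X, w(Y) ≤ C } and p(X), p(Y) denote total profits. That is, h*(X) = p(X) − Opt(X). -/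
/-!
Each edge removes an item of the current node, so the cost of a path telescopes to `p X - p Y`,
where its final node `Y` is a feasible subset of `X`; hence every path costs at least `p X - Opt X`.
Conversely, removing the items of `X \ Y` one at a time for an optimal `Y` is a path of exactly
that cost.
-/

namespace Finset

variable {α : Type*} [DecidableEq α]

def IsErasePath (f : ℕ → Finset α) (i : ℕ → α) (k : ℕ) : Prop :=
  ∀ j < k, i j ∈ f j ∧ f (j + 1) = (f j).erase (i j)

namespace IsErasePath

variable {f : ℕ → Finset α} {i : ℕ → α} {k : ℕ}

theorem sum_range_eq_sub {β : Type*} [AddCommGroup β] (hf : IsErasePath f i k) (p : α → β) :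
    ∑ j ∈ range k, p (i j) = ∑ a ∈ f 0, p a - ∑ a ∈ f k, p a := by
  induction k with
  | zero => simp
  | succ k ih =>
    obtain ⟨hmem, herase⟩ := hf k k.lt_succ_self
    rw [sum_range_succ, ih fun j hj => hf j (hj.trans k.lt_succ_self), herase,
      sum_erase_eq_sub hmem]
    abel

theorem last_subset (hf : IsErasePath f i k) {j : ℕ} (hj : j ≤ k) : f k ⊆ f j := by
  induction k, hj using Nat.le_induction with
  | base => exact Subset.rfl
  | succ k _ ih =>
    rw [(hf k k.lt_succ_self).2]
    exact (erase_subset _ _).trans (ih fun j hj => hf j (hj.trans k.lt_succ_self))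

end IsErasePath

theorem exists_isErasePath [Nonempty α] {Y X : Finset α} (hYX : Y ⊆ X) :
    ∃ (k : ℕ) (f : ℕ → Finset α) (i : ℕ → α), IsErasePath f i k ∧ f 0 = X ∧ f k = Y := by
  induction X using Finset.strongInduction with
  | H X ih =>
    by_cases hXY : X ⊆ Y
    · exact ⟨0, fun _ => X, fun _ => Classical.arbitrary α, fun _ h => absurd h (by omega),
        rfl, hXY.antisymm hYX⟩
    obtain ⟨a, haX, haY⟩ := not_subset.1 hXY
    obtain ⟨k, f, i, hf, hf0, hfk⟩ := ih (X.erase a) (erase_ssubset haX)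
      fun y hy => mem_erase.2 ⟨fun h => haY (h ▸ hy), hYX hy⟩
    refine ⟨k + 1, fun | 0 => X | j + 1 => f j, fun | 0 => a | j + 1 => i j, ?_, rfl, hfk⟩
    rintro (_ | j) hj
    · exact ⟨haX, hf0⟩
    · exact hf j (by omega)

end Finset

theorem knapsack_hstar_eq_profit_sub_opt_general
    {α : Type*} [DecidableEq α] (p w : α → ℤ) (C : ℤ)
    (X : Finset α)
    (feas : Finset (Finset α))
    (hfeas : feas = X.powerset.filter (fun Y => Y.Nonempty ∧ ∑ a ∈ Y, w a ≤ C))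
    (hfeas_ne : feas.Nonempty)
    (Opt : ℤ) (hOpt : Opt = feas.sup' hfeas_ne (fun Y => ∑ a ∈ Y, p a)) :
    IsLeast
      { t : ℤ | ∃ (k : ℕ) (f : ℕ → Finset α) (i : ℕ → α),
          f 0 = X ∧
          (∀ j, j < k →
            i j ∈ f j ∧ f (j + 1) = (f j).erase (i j) ∧ (f (j + 1)).Nonempty) ∧
          (f k).Nonempty ∧ (∑ a ∈ f k, w a) ≤ C ∧
          t = ∑ j ∈ Finset.range k, p (i j) }
      ((∑ a ∈ X, p a) - Opt) := by
  constructor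
  · obtain ⟨Y, hYfeas, hYopt⟩ := Finset.exists_mem_eq_sup' hfeas_ne fun Y => ∑ a ∈ Y, p a
    rw [hfeas, Finset.mem_filter, Finset.mem_powerset] at hYfeas
    obtain ⟨hYX, hYne, hYw⟩ := hYfeas
    have : Nonempty α := hYne.to_type
    obtain ⟨k, f, i, hf, hf0, hfk⟩ := Finset.exists_isErasePath hYX
    refine ⟨k, f, i, hf0, fun j hj => ⟨(hf j hj).1, (hf j hj).2, ?_⟩, hfk ▸ hYne, hfk ▸ hYw, ?_⟩
    · exact (hfk ▸ hYne).mono (hf.last_subset hj)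
    · rw [hf.sum_range_eq_sub, hf0, hfk, hOpt, hYopt]
  · rintro t ⟨k, f, i, hf0, hstep, hne, hwk, rfl⟩
    have hf : Finset.IsErasePath f i k := fun j hj => ⟨(hstep j hj).1, (hstep j hj).2.1⟩
    have hfeask : f k ∈ feas := by
      rw [hfeas, Finset.mem_filter, Finset.mem_powerset, ← hf0]
      exact ⟨hf.last_subset k.zero_le, hne, hwk⟩
    have hle : ∑ a ∈ f k, p a ≤ Opt := hOpt ▸ Finset.le_sup' (fun Y => ∑ a ∈ Y, p a) hfeask
    rw [hf.sum_range_eq_sub, hf0]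
    linarith

/-- **`h*(X) = p(X) − Opt(X)` in the Knapsack search space.** Nodes of the Knapsack
search graph are nonempty finite sets of items; from a node `Z` there is an edge of
cost `p i` to `Z.erase i` for each `i ∈ Z` with `Z.erase i` nonempty; a node `Y` is a
solution if `w Y ≤ C`.  For a node `X` containing at least one nonempty feasible
subset, the minimum total cost over all paths from `X` to a solution node equals
`p X - Opt X`, where `Opt X` is the maximal total profit of a nonempty subset
`Y ⊆ X` with `w Y ≤ C`. -/
theorem knapsack_hstar_eq_profit_sub_opt
    {α : Type*} [DecidableEq α] (p w : α → ℤ) (C : ℤ)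
    (hp : ∀ a, 0 < p a) (hw : ∀ a, 0 < w a) (hC : 0 < C)
    (X : Finset α) (hX : X.Nonempty)
    (feas : Finset (Finset α))
    (hfeas : feas = X.powerset.filter (fun Y => Y.Nonempty ∧ ∑ a ∈ Y, w a ≤ C))
    (hfeas_ne : feas.Nonempty)
    (Opt : ℤ) (hOpt : Opt = feas.sup' hfeas_ne (fun Y => ∑ a ∈ Y, p a)) :
    IsLeast
      { t : ℤ | ∃ (k : ℕ) (f : ℕ → Finset α) (i : ℕ → α),
          f 0 = X ∧
          (∀ j, j < k →
            i j ∈ f j ∧ f (j + 1) = (f j).erase (i j) ∧ (f (j + 1)).Nonempty) ∧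
          (f k).Nonempty ∧ (∑ a ∈ f k, w a) ≤ C ∧
          t = ∑ j ∈ Finset.range k, p (i j) }
      ((∑ a ∈ X, p a) - Opt) :=
  knapsack_hstar_eq_profit_sub_opt_general p w C X feas hfeas hfeas_ne Opt hOpt
end
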